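/- arXiv:1608.00961 — 2 statements merged into one kernel-verified Lean document; each statement's English description precedes it below -/
import Mathlib

section
/- Let R be a commutative ring and J an ideal of R such that R is J-adically Hausdorff complete (IsAdicComplete J R). Let m be a natural number and T an m × m matrix with entries in R. Then T is a unit in the ring of m × m matrices over R if and only if its entrywise reduction modulo J, i.e. the matrix T.map (Ideal.Quotient.mk J) with entries in R/J, is a unit in the ring of m × m matrices over R/J. -/
/-! A matrix over a commutative ring is invertible iff its determinant is, and reduction modulo `J`
commutes with the determinant. Since `J` lies in the Jacobson radical of a `J`-adically complete
ring, an element that is a unit modulo `J` is already a unit. -/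

instance RingHom.isLocalHom_mapMatrix {R S : Type*} [CommRing R] [CommRing S] (f : R →+* S)
    [IsLocalHom f] {n : Type*} [Fintype n] [DecidableEq n] :
    IsLocalHom (f.mapMatrix : Matrix n n R →+* Matrix n n S) where
  map_nonunit M hM := by
    rw [Matrix.isUnit_iff_isUnit_det, ← f.map_det] at hM
    rw [Matrix.isUnit_iff_isUnit_det]
    exact hM.of_map f

theorem IsAdicComplete.isLocalHom_quotient_mk {R : Type*} [CommRing R] (J : Ideal R)
    [IsAdicComplete J R] : IsLocalHom (Ideal.Quotient.mk J) :=
  isLocalHom_of_le_jacobson_bot J (IsAdicComplete.le_jacobson_bot J)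

/-- Over a `J`-adically Hausdorff complete commutative ring, a square matrix is
invertible if and only if it is invertible modulo `J`. -/
theorem matrix_isUnit_iff_isUnit_map_quotient
    (R : Type*) [CommRing R] (J : Ideal R) [IsAdicComplete J R]
    (m : ℕ) (T : Matrix (Fin m) (Fin m) R) :
    IsUnit T ↔ IsUnit (T.map (Ideal.Quotient.mk J)) := by
  have := IsAdicComplete.isLocalHom_quotient_mk J
  exact (isUnit_map_iff (Ideal.Quotient.mk J).mapMatrix T).symm
end

section
/- Let R be a commutative ring, J an ideal of R, and M an R-module that is J-adically Hausdorff complete (IsAdicComplete J M). Let D and D' be submodules of M that are complementary, i.e. D ⊓ D' = ⊥ and D ⊔ D' = ⊤. Then D is J-adically Hausdorff complete as an R-module (IsAdicComplete J D). -/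
/-!
A direct summand `D` of `M` is a retract: the inclusion `D → M` has the projection along `D'` as
a left inverse. Linear maps respect the filtrations `J ^ n • ⊤`, so a Cauchy sequence in `D` is
Cauchy in `M`, and the projection of its limit in `M` is a limit in `D`; Hausdorffness passes to
`D` because the inclusion is injective.
-/

section Retract

variable {R M N : Type*} [CommRing R] {I : Ideal R}
  [AddCommGroup M] [Module R M] [AddCommGroup N] [Module R N]

theorem SModEq.map_smul_top {x y : M} (h : x ≡ y [SMOD (I • ⊤ : Submodule R M)])
    (f : M →ₗ[R] N) : f x ≡ f y [SMOD (I • ⊤ : Submodule R N)] :=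
  SModEq.sub_mem.mpr <| by
    rw [← map_sub]
    exact Submodule.smul_top_le_comap_smul_top I f (SModEq.sub_mem.mp h)

theorem IsHausdorff.of_injective [IsHausdorff I N] (f : M →ₗ[R] N)
    (hf : Function.Injective f) : IsHausdorff I M :=
  ⟨fun x hx => hf <| by
    simpa only [map_zero] using IsHausdorff.eq_iff_smodEq.mpr fun n => (hx n).map_smul_top f⟩

theorem IsPrecomplete.of_leftInverse [IsPrecomplete I N] (i : M →ₗ[R] N) (r : N →ₗ[R] M)
    (hri : Function.LeftInverse r i) : IsPrecomplete I M := by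
  refine ⟨fun f hf => ?_⟩
  obtain ⟨L, hL⟩ := IsPrecomplete.prec ‹_› fun hmn => (hf hmn).map_smul_top i
  exact ⟨r L, fun n => by simpa only [hri (f n)] using (hL n).map_smul_top r⟩

theorem IsAdicComplete.of_leftInverse [IsAdicComplete I N] (i : M →ₗ[R] N) (r : N →ₗ[R] M)
    (hri : Function.LeftInverse r i) : IsAdicComplete I M where
  toIsHausdorff := .of_injective i hri.injective
  toIsPrecomplete := .of_leftInverse i r hri

end Retract

/-- A direct summand of a `J`-adically Hausdorff complete module is itself
`J`-adically Hausdorff complete. -/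
theorem isAdicComplete_of_isCompl_summand
    (R : Type*) [CommRing R] (J : Ideal R)
    (M : Type*) [AddCommGroup M] [Module R M] [IsAdicComplete J M]
    (D D' : Submodule R M) (h1 : D ⊓ D' = ⊥) (h2 : D ⊔ D' = ⊤) :
    IsAdicComplete J D :=
  have hc : IsCompl D D' := ⟨disjoint_iff.mpr h1, codisjoint_iff.mpr h2⟩
  .of_leftInverse D.subtype (D.projectionOnto D' hc)
    (Submodule.projectionOnto_apply_left hc)
end
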